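/- Let ρ be a pseudometric on 𝔐 which is continuous with respect to the sup metric and invariant under the Homeo⁺[0,1]-action (ρ(ξ∘g, ζ∘g) = ρ(ξ,ζ) for all g ∈ Homeo⁺[0,1]), let U_ρ ⊆ (0,1) be the union of all ρ-gaps, and let K_ρ = (0,1) ∖ U_ρ. Then K_ρ has no isolated points. -/

import Mathlib

/-- The space `𝔐` of continuous weakly increasing surjections of `[0,1]`, with the
sup metric (inherited from `C([0,1],[0,1])`). -/
def M : Type :=
  {f : C(unitInterval, unitInterval) // Monotone f ∧ Function.Surjective f}

noncomputable instance : MetricSpace M := Subtype.metricSpace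

/-- Right composition of `ξ ∈ 𝔐` with an increasing self-homeomorphism `g` of `[0,1]`,
i.e. the action of `g⁻¹ ∈ Homeo⁺[0,1]` on `ξ`. -/
def Mcomp (ξ : M) (g : unitInterval ≃ₜ unitInterval) (hg : Monotone g) : M :=
  ⟨(ξ.1).comp ⟨⇑g, g.continuous⟩, by
    constructor
    · intro a b hab
      exact ξ.2.1 (hg hab)
    · intro y
      obtain ⟨x, hx⟩ := ξ.2.2 y
      exact ⟨g.symm x, by simpa using hx⟩⟩

/-- `(α,β)` is a `ρ`-gap: a nonempty open subinterval of `(0,1)` for which there are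
`ξ, ζ ∈ 𝔐` with `ρ(ξ,ζ) = 0` and, for every `s`, `ξ(s) ≤ α` or `ζ(s) ≥ β`. -/
def IsGap (ρ : M → M → ℝ) (α β : ℝ) : Prop :=
  0 ≤ α ∧ α < β ∧ β ≤ 1 ∧
    ∃ ξ ζ : M, ρ ξ ζ = 0 ∧ ∀ s : unitInterval, (ξ.1 s : ℝ) ≤ α ∨ β ≤ (ζ.1 s : ℝ)

/-- `U_ρ`, the union of all `ρ`-gaps. -/
def Urho (ρ : M → M → ℝ) : Set ℝ :=
  {t | ∃ α β : ℝ, IsGap ρ α β ∧ t ∈ Set.Ioo α β}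

/-!
Two closure properties of `ρ`-gaps drive the proof. Gaps that overlap or abut merge into one:
the right witness `ζ` of the first gap and the left witness `ξ'` of the second admit a common
reparametrization `ζ ∘ p = ξ' ∘ q` by elements of `𝔐`, chosen to cross common level sets in a
fixed order, and `ρ` is invariant under precomposition with all of `𝔐` (a continuity argument
from the homeomorphism case). A limit of gaps is a gap: reparametrized, the witnesses become
uniformly Lipschitz, so Arzelà–Ascoli yields convergent witnesses for the limit interval.

If `t ∈ K_ρ` were isolated, the points just left of `t` would lie in gaps ending at most at `t`;
merging them and passing to the limit gives a gap `(α, t)`, symmetrically a gap `(t, β)`, and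
merging these two yields a gap containing `t`.
-/

open Set Filter Topology unitInterval
open scoped NNReal

theorem ContinuousMap.isCompact_setOf_lipschitzWith {X Y : Type*} [PseudoMetricSpace X]
    [CompactSpace X] [PseudoMetricSpace Y] [CompactSpace Y] (K : ℝ≥0) :
    IsCompact {f : C(X, Y) | LipschitzWith K f} := by
  refine ArzelaAscoli.isCompact_of_equicontinuous _ ?_
    (LipschitzWith.uniformEquicontinuous _ K fun f => f.2).equicontinuous
  have : ContinuousMap.toFun '' {f : C(X, Y) | LipschitzWith K f} = {g | LipschitzWith K g} :=
    Set.ext fun g => ⟨fun ⟨f, hf, hfg⟩ => hfg ▸ hf, fun hg => ⟨⟨g, hg.continuous⟩, hg, rfl⟩⟩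
  rw [this]
  exact (isClosed_setOfPred_lipschitzWith K).isCompact

lemma unitInterval.lipschitzWith_of_monotone {f : I → I} {K : ℝ≥0} (hf : Monotone f)
    (h : ∀ x y, x ≤ y → (f y : ℝ) - f x ≤ K * (y - x)) : LipschitzWith K f := by
  refine LipschitzWith.of_dist_le_mul fun x y => ?_
  wlog hxy : x ≤ y generalizing x y
  · rw [dist_comm, dist_comm x]; exact this y x (le_of_not_ge hxy)
  have hfxy : (f x : ℝ) ≤ f y := hf hxy
  have hxy' : (x : ℝ) ≤ y := hxy
  rw [Subtype.dist_eq, Subtype.dist_eq, Real.dist_eq, Real.dist_eq, abs_sub_comm,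
    abs_of_nonneg (sub_nonneg.2 hfxy), abs_sub_comm, abs_of_nonneg (sub_nonneg.2 hxy')]
  exact h x y hxy

lemma unitInterval.surjective_of_map_zero_of_map_one {φ : I → I} (hφ : Continuous φ)
    (h0 : φ 0 = 0) (h1 : φ 1 = 1) : Function.Surjective φ := fun y =>
  intermediate_value_univ 0 1 hφ (by rw [h0, h1]; exact ⟨nonneg', le_one'⟩)

section ClosureOfInterval

variable {X α : Type*} [TopologicalSpace X] [LinearOrder X] [OrderTopology X] [DenselyOrdered X]
  [TopologicalSpace α] [LinearOrder α] [OrderClosedTopology α] {φ : X → α} {x : X} {a : α}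

lemma Continuous.le_of_forall_lt_imp_le (hφ : Continuous φ) (hx : (Iio x).Nonempty)
    (h : ∀ y < x, φ y ≤ a) : φ x ≤ a :=
  closure_minimal (s := Iio x) (fun y hy => h y hy) (isClosed_le hφ continuous_const)
    (by rw [closure_Iio' hx]; exact self_mem_Iic)

lemma Continuous.ge_of_forall_gt_imp_ge (hφ : Continuous φ) (hx : (Ioi x).Nonempty)
    (h : ∀ y > x, a ≤ φ y) : a ≤ φ x :=
  closure_minimal (s := Ioi x) (fun y hy => h y hy) (isClosed_le continuous_const hφ)
    (by rw [closure_Ioi' hx]; exact self_mem_Ici)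

end ClosureOfInterval

section IntervalFamilies

variable {P : ℝ → ℝ → Prop}

def unionIoo (P : ℝ → ℝ → Prop) : Set ℝ := {t | ∃ a b, P a b ∧ t ∈ Ioo a b}

lemma mem_unionIoo_neg_swap {t : ℝ} :
    t ∈ unionIoo (fun a b => P (-b) (-a)) ↔ -t ∈ unionIoo P := by
  constructor
  · rintro ⟨a, b, h, hat, htb⟩
    exact ⟨-b, -a, h, neg_lt_neg htb, neg_lt_neg hat⟩
  · rintro ⟨a, b, h, hat, htb⟩
    exact ⟨-b, -a, by simpa using h, by linarith, by linarith⟩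

/-- Fix `(a, b₀)` with `a < t - δ / 2 < b₀ ≤ t`. The right ends `b ≤ t` of the intervals `(a, b)`
have supremum `t`, since an interval around a smaller supremum could be merged in, and `t` is
attained by closure under limits. -/
theorem exists_left_of_Ioo_subset_unionIoo
    (hmerge : ∀ {a b a' b'}, P a b → P a' b' → a' ≤ b → a < b' → P a b')
    (hlim : ∀ {a b : ℕ → ℝ} {α β : ℝ}, (∀ n, P (a n) (b n)) → Tendsto a atTop (𝓝 α) →
      Tendsto b atTop (𝓝 β) → α < β → P α β)
    {t δ : ℝ} (hδ : 0 < δ) (ht : t ∉ unionIoo P) (hsub : Ioo (t - δ) t ⊆ unionIoo P) :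
    ∃ a < t, P a t := by
  obtain ⟨a, b₀, hab₀, ha, hb₀⟩ := hsub (show t - δ / 2 ∈ Ioo (t - δ) t from
    ⟨by linarith, by linarith⟩)
  have hle : ∀ {a' b'}, P a' b' → a' < t → b' ≤ t := fun h h' =>
    le_of_not_gt fun hb => ht ⟨_, _, h, h', hb⟩
  set S := {b | P a b ∧ b ≤ t}
  have hS : b₀ ∈ S := ⟨hab₀, hle hab₀ (by linarith)⟩
  have hbdd : BddAbove S := ⟨t, fun b hb => hb.2⟩
  have hsup : sSup S = t := by
    refine le_antisymm (csSup_le ⟨_, hS⟩ fun b hb => hb.2) (le_of_not_gt fun hlt => ?_)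
    have hb₀S : b₀ ≤ sSup S := le_csSup hbdd hS
    obtain ⟨a₁, b₁, h₁, ha₁, hb₁⟩ := hsub ⟨by linarith, hlt⟩
    obtain ⟨b₂, hb₂S, hb₂⟩ := exists_lt_of_lt_csSup ⟨_, hS⟩ ha₁
    have hb₁S : b₁ ∈ S := ⟨hmerge hb₂S.1 h₁ hb₂.le (by linarith), hle h₁ (ha₁.trans hlt)⟩
    exact (le_csSup hbdd hb₁S).not_gt hb₁
  obtain ⟨u, -, hu, huS⟩ := exists_seq_tendsto_sSup ⟨_, hS⟩ hbdd
  exact ⟨a, by linarith, hlim (fun n => (huS n).1) tendsto_const_nhds (hsup ▸ hu) (by linarith)⟩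

theorem mem_unionIoo_of_diff_subset
    (hmerge : ∀ {a b a' b'}, P a b → P a' b' → a' ≤ b → a < b' → P a b')
    (hlim : ∀ {a b : ℕ → ℝ} {α β : ℝ}, (∀ n, P (a n) (b n)) → Tendsto a atTop (𝓝 α) →
      Tendsto b atTop (𝓝 β) → α < β → P α β)
    {t δ : ℝ} (hδ : 0 < δ) (h : Ioo (t - δ) (t + δ) \ {t} ⊆ unionIoo P) : t ∈ unionIoo P := by
  by_contra ht
  obtain ⟨a, ha, hat⟩ := exists_left_of_Ioo_subset_unionIoo hmerge hlim hδ ht fun s hs =>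
    h ⟨⟨hs.1, by linarith [hs.2]⟩, hs.2.ne⟩
  obtain ⟨b, hb, hbt⟩ := exists_left_of_Ioo_subset_unionIoo (P := fun a b => P (-b) (-a))
    (fun h h' hle hlt => hmerge h' h (neg_le_neg hle) (neg_lt_neg hlt))
    (fun h ha hb hab => hlim h hb.neg ha.neg (neg_lt_neg hab)) hδ
    (by rwa [mem_unionIoo_neg_swap, neg_neg]) fun s hs => mem_unionIoo_neg_swap.2
      (h ⟨⟨by linarith [hs.2], by linarith [hs.1]⟩, fun hst => by
        rw [mem_singleton_iff] at hst; linarith [hs.2]⟩)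
  exact ht ⟨a, -b, hmerge hat (by simpa using hbt) le_rfl (by linarith), ha, by linarith⟩

end IntervalFamilies

namespace M

lemma map_zero (ξ : M) : ξ.1 0 = 0 := by
  obtain ⟨x, hx⟩ := ξ.2.2 0
  exact le_antisymm ((ξ.2.1 nonneg').trans_eq hx) nonneg'

lemma map_one (ξ : M) : ξ.1 1 = 1 := by
  obtain ⟨x, hx⟩ := ξ.2.2 1
  exact le_antisymm le_one' (hx.symm.trans_le (ξ.2.1 le_one'))

lemma range_val :
    range (Subtype.val : M → C(I, I)) = {f : C(I, I) | Monotone f ∧ f 0 = 0 ∧ f 1 = 1} := by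
  ext f
  refine ⟨?_, fun ⟨hm, h0, h1⟩ =>
    ⟨⟨f, hm, surjective_of_map_zero_of_map_one f.continuous h0 h1⟩, rfl⟩⟩
  rintro ⟨ξ, rfl⟩
  exact ⟨ξ.2.1, map_zero ξ, map_one ξ⟩

lemma isClosed_range_val : IsClosed (range (Subtype.val : M → C(I, I))) := by
  rw [range_val]
  exact (isClosed_monotone.preimage continuous_coeFun).inter
    ((isClosed_eq (continuous_eval_const 0) continuous_const).inter
      (isClosed_eq (continuous_eval_const 1) continuous_const))

def comp (ξ θ : M) : M :=
  ⟨ξ.1.comp θ.1, ξ.2.1.comp θ.2.1, ξ.2.2.comp θ.2.2⟩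

lemma continuous_comp (ξ : M) : Continuous ξ.comp :=
  ((ContinuousMap.continuous_postcomp ξ.1).comp continuous_subtype_val).subtype_mk _

noncomputable def toOrderIso (θ : M) (hθ : StrictMono θ.1) : I ≃o I :=
  hθ.orderIsoOfSurjective θ.1 θ.2.2

/-- The straight-line homotopy `(c, s) ↦ (1 - c) θ(s) + c s` from `θ` to the identity. -/
def homotopyId (θ : M) : C(I × I, I) :=
  ⟨fun p => Icc.convexComb (θ.1 p.2) p.2 p.1, by fun_prop⟩

def convexCombId (θ : M) (c : I) : M :=
  ⟨θ.homotopyId.curry c, fun x y hxy => by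
    change (1 - (c : ℝ)) * θ.1 x + c * x ≤ (1 - (c : ℝ)) * θ.1 y + c * y
    have := Subtype.coe_le_coe.2 (θ.2.1 hxy)
    have : (x : ℝ) ≤ y := hxy
    nlinarith [c.2.1, c.2.2], by
    refine surjective_of_map_zero_of_map_one (ContinuousMap.continuous _) ?_ ?_ <;>
      ext <;> simp [homotopyId, map_zero, map_one]⟩

lemma convexCombId_zero (θ : M) : θ.convexCombId 0 = θ :=
  Subtype.ext (ContinuousMap.ext fun s => by simp [convexCombId, homotopyId])

lemma strictMono_convexCombId (θ : M) {c : I} (hc : 0 < c) : StrictMono (θ.convexCombId c).1 :=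
  fun x y hxy => by
    change (1 - (c : ℝ)) * θ.1 x + c * x < (1 - (c : ℝ)) * θ.1 y + c * y
    have := Subtype.coe_le_coe.2 (θ.2.1 hxy.le)
    have : (x : ℝ) < y := hxy
    have : (0 : ℝ) < c := hc
    nlinarith [c.2.2]

lemma continuous_convexCombId (θ : M) : Continuous θ.convexCombId :=
  θ.homotopyId.curry.continuous.subtype_mk _

lemma continuous_apply (s : I) : Continuous fun ξ : M => (ξ.1 s : ℝ) :=
  continuous_subtype_val.comp ((continuous_eval_const s).comp continuous_subtype_val)

lemma isCompact_setOf_lipschitzWith (K : ℝ≥0) : IsCompact {ξ : M | LipschitzWith K ξ.1} :=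
  Topology.IsInducing.subtypeVal.isCompact_preimage isClosed_range_val
    (ContinuousMap.isCompact_setOf_lipschitzWith K)

lemma lipschitzWith_comp_symm (ξ θ : M) (hθ : StrictMono θ.1) {K : ℝ≥0}
    (h : ∀ x y, x ≤ y → (ξ.1 y : ℝ) - ξ.1 x ≤ K * ((θ.1 y : ℝ) - θ.1 x)) :
    LipschitzWith K (ξ.1 ∘ (θ.toOrderIso hθ).symm) := by
  refine lipschitzWith_of_monotone (ξ.2.1.comp (θ.toOrderIso hθ).symm.monotone) fun x y hxy => ?_
  have hx : θ.1 ((θ.toOrderIso hθ).symm x) = x := (θ.toOrderIso hθ).apply_symm_apply x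
  have hy : θ.1 ((θ.toOrderIso hθ).symm y) = y := (θ.toOrderIso hθ).apply_symm_apply y
  simpa only [Function.comp_apply, hx, hy] using
    h _ _ ((θ.toOrderIso hθ).symm.monotone hxy)

/-- Reparametrizing by the inverse of `(id + ξ + ζ) / 3` makes both `ξ` and `ζ` 3-Lipschitz. -/
lemma exists_homeomorph_lipschitzWith (ξ ζ : M) :
    ∃ (g : I ≃ₜ I) (hg : Monotone g),
      LipschitzWith 3 (Mcomp ξ g hg).1 ∧ LipschitzWith 3 (Mcomp ζ g hg).1 := by
  have mem : ∀ s : I, ((s : ℝ) + ξ.1 s + ζ.1 s) / 3 ∈ I := fun s => by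
    constructor <;> linarith [s.2.1, s.2.2, (ξ.1 s).2.1, (ξ.1 s).2.2, (ζ.1 s).2.1, (ζ.1 s).2.2]
  have hmono : ∀ x y : I, x ≤ y →
      (x : ℝ) ≤ y ∧ (ξ.1 x : ℝ) ≤ ξ.1 y ∧ (ζ.1 x : ℝ) ≤ ζ.1 y := fun x y hxy =>
    ⟨hxy, ξ.2.1 hxy, ζ.2.1 hxy⟩
  set θ : M := ⟨⟨fun s => ⟨_, mem s⟩, by fun_prop⟩, fun x y hxy => by
      obtain ⟨h1, h2, h3⟩ := hmono x y hxy
      show ((x : ℝ) + ξ.1 x + ζ.1 x) / 3 ≤ ((y : ℝ) + ξ.1 y + ζ.1 y) / 3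
      linarith, by
    refine surjective_of_map_zero_of_map_one (by fun_prop) ?_ ?_ <;>
      ext <;> norm_num [map_zero, map_one]⟩
  have hθ : StrictMono θ.1 := fun x y hxy => by
    obtain ⟨-, h2, h3⟩ := hmono x y hxy.le
    show ((x : ℝ) + ξ.1 x + ζ.1 x) / 3 < ((y : ℝ) + ξ.1 y + ζ.1 y) / 3
    have : (x : ℝ) < y := hxy
    linarith
  refine ⟨(θ.toOrderIso hθ).symm.toHomeomorph, (θ.toOrderIso hθ).symm.monotone,
    lipschitzWith_comp_symm ξ θ hθ fun x y hxy => ?_,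
    lipschitzWith_comp_symm ζ θ hθ fun x y hxy => ?_⟩ <;>
  · obtain ⟨h1, h2, h3⟩ := hmono x y hxy
    change _ ≤ 3 * (_ / 3 - _ / 3)
    linarith

noncomputable def extend (ξ : M) : ℝ → ℝ := IccExtend zero_le_one fun s => (ξ.1 s : ℝ)

lemma extend_coe (ξ : M) (s : I) : ξ.extend s = ξ.1 s := IccExtend_val _ _ _

lemma extend_zero (ξ : M) : ξ.extend 0 = 0 := by
  simpa [map_zero] using ξ.extend_coe 0

lemma extend_one (ξ : M) : ξ.extend 1 = 1 := by
  simpa [map_one] using ξ.extend_coe 1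

lemma extend_mem (ξ : M) (u : ℝ) : ξ.extend u ∈ I := (ξ.1 _).2

lemma monotone_extend (ξ : M) : Monotone ξ.extend :=
  Monotone.IccExtend _ fun _ _ h => ξ.2.1 h

lemma continuous_extend (ξ : M) : Continuous ξ.extend :=
  continuous_IccExtend_iff.2 (continuous_subtype_val.comp ξ.1.continuous)

variable (f g : M)

/-- The coupling of `f` and `g` runs through pairs `(x, y)` with `f x = g y`, parametrized by
`s = (x + y) / 2`; `couplingTime f g s` is the least admissible `x`, see `extend_couplingTime`. -/
def couplingSet (s : ℝ) : Set ℝ :=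
  {u | max 0 (2 * s - 1) ≤ u ∧ g.extend (2 * s - u) ≤ f.extend u}

noncomputable def couplingTime (s : ℝ) : ℝ := sInf (couplingSet f g s)

variable {f g} {s s' : ℝ}

lemma couplingTime_le {u : ℝ} (hu : u ∈ couplingSet f g s) : couplingTime f g s ≤ u :=
  csInf_le ⟨_, fun _ hv => hv.1⟩ hu

lemma min_mem_couplingSet (hs : s ∈ I) : min 1 (2 * s) ∈ couplingSet f g s := by
  refine ⟨max_le (le_min zero_le_one (by linarith [hs.1])) (le_min (by linarith [hs.2])
    (by linarith)), ?_⟩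
  rcases min_cases 1 (2 * s) with ⟨h, -⟩ | ⟨h, -⟩ <;> rw [h]
  · rw [f.extend_one]; exact (g.extend_mem _).2
  · rw [sub_self, g.extend_zero]; exact (f.extend_mem _).1

lemma couplingTime_mem (hs : s ∈ I) : couplingTime f g s ∈ couplingSet f g s := by
  refine IsClosed.csInf_mem ?_ ⟨_, min_mem_couplingSet hs⟩ ⟨_, fun _ hv => hv.1⟩
  exact (isClosed_le continuous_const continuous_id).inter (isClosed_le
    (g.continuous_extend.comp (continuous_const.sub continuous_id)) f.continuous_extend)

lemma couplingTime_le_min (hs : s ∈ I) : couplingTime f g s ≤ min 1 (2 * s) :=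
  couplingTime_le (min_mem_couplingSet hs)

lemma extend_couplingTime (hs : s ∈ I) :
    f.extend (couplingTime f g s) = g.extend (2 * s - couplingTime f g s) := by
  have hmin := min_mem_couplingSet (f := f) (g := g) hs
  set k : ℝ → ℝ := fun u => f.extend u - g.extend (2 * s - u)
  have hk : Monotone k := fun u v huv => sub_le_sub (f.monotone_extend huv)
    (g.monotone_extend (by linarith))
  have hL : k (max 0 (2 * s - 1)) ≤ 0 := by
    rcases max_cases 0 (2 * s - 1) with ⟨h, -⟩ | ⟨h, -⟩ <;> simp only [k, h]
    · linarith [f.extend_zero, (g.extend_mem (2 * s - 0)).1]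
    · rw [show 2 * s - (2 * s - 1) = 1 by ring, g.extend_one]
      linarith [(f.extend_mem (2 * s - 1)).2]
  have hm : 0 ≤ k (min 1 (2 * s)) := sub_nonneg.2 hmin.2
  have hkc : Continuous k :=
    f.continuous_extend.sub (g.continuous_extend.comp (continuous_const.sub continuous_id))
  obtain ⟨z, hz, hkz⟩ := intermediate_value_Icc hmin.1 hkc.continuousOn ⟨hL, hm⟩
  have hzT : k (couplingTime f g s) ≤ k z :=
    hk (couplingTime_le ⟨hz.1, sub_nonneg.1 hkz.ge⟩)
  have hT := (couplingTime_mem (f := f) (g := g) hs).2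
  simp only [k] at hzT hkz
  linarith

lemma couplingTime_mono (hs' : s' ∈ I) (h : s ≤ s') : couplingTime f g s ≤ couplingTime f g s' :=
  couplingTime_le ⟨le_trans (max_le_max le_rfl (by linarith)) (couplingTime_mem hs').1,
    (g.monotone_extend (by linarith)).trans (couplingTime_mem hs').2⟩

lemma couplingTime_le_add (hs : s ∈ I) (h : s ≤ s') :
    couplingTime f g s' ≤ couplingTime f g s + 2 * (s' - s) := by
  have hmem := couplingTime_mem (f := f) (g := g) hs
  refine couplingTime_le ⟨max_le (by linarith [le_max_left 0 (2 * s - 1), hmem.1])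
    (by linarith [le_max_right 0 (2 * s - 1), hmem.1]), ?_⟩
  rw [show 2 * s' - (couplingTime f g s + 2 * (s' - s)) = 2 * s - couplingTime f g s by ring,
    ← extend_couplingTime hs]
  exact f.monotone_extend (by linarith)

lemma couplingTime_mem_unitInterval (hs : s ∈ I) : couplingTime f g s ∈ I :=
  ⟨(le_max_left _ _).trans (couplingTime_mem hs).1,
    (couplingTime_le_min hs).trans (min_le_left _ _)⟩

lemma two_mul_sub_couplingTime_mem_unitInterval (hs : s ∈ I) :
    2 * s - couplingTime f g s ∈ I :=
  ⟨by linarith [couplingTime_le_min (f := f) (g := g) hs, min_le_right 1 (2 * s)],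
    by linarith [le_max_right 0 (2 * s - 1), (couplingTime_mem (f := f) (g := g) hs).1]⟩

lemma couplingTime_zero : couplingTime f g 0 = 0 :=
  le_antisymm (by simpa using couplingTime_le_min (f := f) (g := g) zero_mem)
    (by simpa using (couplingTime_mem (f := f) (g := g) zero_mem).1)

lemma couplingTime_one : couplingTime f g 1 = 1 :=
  le_antisymm (by simpa using couplingTime_le_min (f := f) (g := g) one_mem)
    (by
      have := (le_max_right _ _).trans (couplingTime_mem (f := f) (g := g) one_mem).1
      norm_num at this
      exact this)

variable (f g)

lemma continuous_couplingTime : Continuous fun s : I => couplingTime f g s := by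
  refine (LipschitzWith.of_le_add_mul 2 fun x y => ?_).continuous
  rw [Subtype.dist_eq, Real.dist_eq, NNReal.coe_ofNat]
  rcases le_total (x : ℝ) y with h | h
  · linarith [couplingTime_mono (f := f) (g := g) y.2 h, abs_nonneg ((x : ℝ) - y)]
  · linarith [couplingTime_le_add (f := f) (g := g) y.2 h, le_abs_self ((x : ℝ) - y)]

noncomputable def couplingFst : M :=
  ⟨⟨fun s => ⟨_, couplingTime_mem_unitInterval s.2⟩, (continuous_couplingTime f g).subtype_mk _⟩,
    fun _ y h => couplingTime_mono y.2 h, by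
    refine surjective_of_map_zero_of_map_one (ContinuousMap.continuous _) ?_ ?_ <;> ext
    exacts [couplingTime_zero, couplingTime_one]⟩

noncomputable def couplingSnd : M :=
  ⟨⟨fun s => ⟨_, two_mul_sub_couplingTime_mem_unitInterval s.2⟩,
    ((continuous_const.mul continuous_subtype_val).sub (continuous_couplingTime f g)).subtype_mk _⟩,
    fun x _ h => by
      have := couplingTime_le_add (f := f) (g := g) x.2 h
      change 2 * (x : ℝ) - _ ≤ 2 * (_ : ℝ) - _
      linarith, by
    refine surjective_of_map_zero_of_map_one (ContinuousMap.continuous _) ?_ ?_ <;> ext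
    · change 2 * (0 : ℝ) - couplingTime f g 0 = 0
      simp [couplingTime_zero]
    · change 2 * (1 : ℝ) - couplingTime f g 1 = 1
      rw [couplingTime_one]; norm_num⟩

lemma comp_couplingFst : f.comp (couplingFst f g) = g.comp (couplingSnd f g) :=
  Subtype.ext <| ContinuousMap.ext fun s => Subtype.ext <|
    (f.extend_coe ((couplingFst f g).1 s)).symm.trans
      ((extend_couplingTime s.2).trans (g.extend_coe ((couplingSnd f g).1 s)))

/-- By minimality of `couplingTime`, the coupling crosses a common level set of `f` and `g` first
along `g`, then along `f`. -/
lemma couplingFst_or_couplingSnd (s : I) :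
    (∀ x < (couplingFst f g).1 s, f.1 x < f.1 ((couplingFst f g).1 s)) ∨
      ∀ y, (couplingSnd f g).1 s < y → g.1 ((couplingSnd f g).1 s) < g.1 y := by
  by_contra! ⟨⟨x, hx, hfx⟩, ⟨y, hy, hgy⟩⟩
  have hx' : (x : ℝ) < couplingTime f g s := hx
  have hy' : 2 * (s : ℝ) - couplingTime f g s < y := hy
  have hT : couplingTime f g s ≤ max (x : ℝ) (2 * s - y) := by
    refine couplingTime_le ⟨max_le_max x.2.1 (by linarith [y.2.2]), ?_⟩
    calc g.extend (2 * s - max (x : ℝ) (2 * s - y)) ≤ g.extend y :=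
          g.monotone_extend (by linarith [le_max_right (x : ℝ) (2 * s - y)])
      _ = g.1 y := g.extend_coe y
      _ ≤ g.1 ((couplingSnd f g).1 s) := hgy
      _ = g.extend (2 * s - couplingTime f g s) := (g.extend_coe ((couplingSnd f g).1 s)).symm
      _ = f.extend (couplingTime f g s) := (extend_couplingTime s.2).symm
      _ = f.1 ((couplingFst f g).1 s) := f.extend_coe ((couplingFst f g).1 s)
      _ ≤ f.1 x := hfx
      _ = f.extend x := (f.extend_coe x).symm
      _ ≤ f.extend (max (x : ℝ) (2 * s - y)) := f.monotone_extend (le_max_left _ _)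
  exact (max_lt hx' (by linarith)).not_ge hT

theorem exists_coupling (f g : M) :
    ∃ p q : M, f.comp p = g.comp q ∧ ∀ s : I,
      (∀ x < p.1 s, f.1 x < f.1 (p.1 s)) ∨ ∀ y, q.1 s < y → g.1 (q.1 s) < g.1 y :=
  ⟨_, _, comp_couplingFst f g, couplingFst_or_couplingSnd f g⟩

end M

def GapWitness (ρ : M → M → ℝ) (a b : ℝ) (ξ ζ : M) : Prop :=
  ρ ξ ζ = 0 ∧ ∀ s : I, (ξ.1 s : ℝ) ≤ a ∨ b ≤ (ζ.1 s : ℝ)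

section Gaps

variable {ρ : M → M → ℝ} (hrefl : ∀ ξ : M, ρ ξ ξ = 0) (hsymm : ∀ ξ ζ : M, ρ ξ ζ = ρ ζ ξ)
  (htri : ∀ ξ ζ χ : M, ρ ξ χ ≤ ρ ξ ζ + ρ ζ χ) (hcont : Continuous fun p : M × M => ρ p.1 p.2)
  (hinv : ∀ (ξ ζ : M) (g : I ≃ₜ I) (hg : Monotone ⇑g), ρ (Mcomp ξ g hg) (Mcomp ζ g hg) = ρ ξ ζ)

include hrefl hsymm htri in
lemma rho_nonneg (ξ ζ : M) : 0 ≤ ρ ξ ζ := by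
  have := htri ξ ζ ξ
  rw [hrefl, hsymm ζ ξ] at this
  linarith

include hcont hinv in
/-- Invariance extends from increasing homeomorphisms to precomposition by any `θ ∈ 𝔐`, as `θ` is
the limit as `c → 0` of the homeomorphisms `(1 - c) θ + c id`. -/
lemma rho_comp (ξ ζ θ : M) : ρ (ξ.comp θ) (ζ.comp θ) = ρ ξ ζ := by
  set φ : I → ℝ := fun c => ρ (ξ.comp (θ.convexCombId c)) (ζ.comp (θ.convexCombId c))
  have hφ : Continuous φ := hcont.comp
    ((ξ.continuous_comp.comp θ.continuous_convexCombId).prodMk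
      (ζ.continuous_comp.comp θ.continuous_convexCombId))
  have hpos : EqOn φ (fun _ => ρ ξ ζ) (Ioi 0) := fun c hc =>
    let e := (θ.convexCombId c).toOrderIso (θ.strictMono_convexCombId hc)
    hinv ξ ζ e.toHomeomorph e.monotone
  have h0 : (0 : I) ∈ closure (Ioi 0) := by
    rw [closure_Ioi' ⟨1, zero_lt_one⟩]; exact self_mem_Ici
  simpa [φ, M.convexCombId_zero] using hpos.closure hφ continuous_const h0

include hcont in
lemma isClosed_gapWitness :
    IsClosed {x : (ℝ × ℝ) × M × M | GapWitness ρ x.1.1 x.1.2 x.2.1 x.2.2} := by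
  simp only [GapWitness, ofPred_and, ofPred_forall, ofPred_or]
  refine (isClosed_eq (hcont.comp continuous_snd) continuous_const).inter
    (isClosed_iInter fun s => (isClosed_le ?_ (by fun_prop)).union (isClosed_le (by fun_prop) ?_))
  · exact (M.continuous_apply s).comp (continuous_fst.comp continuous_snd)
  · exact (M.continuous_apply s).comp (continuous_snd.comp continuous_snd)

include hinv in
lemma IsGap.exists_lipschitzWith_gapWitness {a b : ℝ} (h : IsGap ρ a b) :
    ∃ ξ ζ : M, GapWitness ρ a b ξ ζ ∧ LipschitzWith 3 ξ.1 ∧ LipschitzWith 3 ζ.1 := by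
  obtain ⟨-, -, -, ξ, ζ, hρ, hsep⟩ := h
  obtain ⟨g, hg, hξ, hζ⟩ := M.exists_homeomorph_lipschitzWith ξ ζ
  exact ⟨Mcomp ξ g hg, Mcomp ζ g hg, ⟨(hinv ξ ζ g hg).trans hρ, fun s => hsep (g s)⟩, hξ, hζ⟩

include hcont hinv in
/-- Gaps are closed under limits: after making the witnesses uniformly Lipschitz, Arzelà–Ascoli
provides a convergent subsequence, and being a witness is a closed condition. -/
theorem IsGap.of_tendsto {a b : ℕ → ℝ} {α β : ℝ} (h : ∀ n, IsGap ρ (a n) (b n))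
    (ha : Tendsto a atTop (𝓝 α)) (hb : Tendsto b atTop (𝓝 β)) (hαβ : α < β) : IsGap ρ α β := by
  choose ξ ζ hw hξ hζ using fun n => (h n).exists_lipschitzWith_gapWitness hinv
  obtain ⟨⟨ξ₀, ζ₀⟩, -, φ, hφ, hlim⟩ :=
    ((M.isCompact_setOf_lipschitzWith 3).prod (M.isCompact_setOf_lipschitzWith 3)).tendsto_subseq
      (x := fun n => (ξ n, ζ n)) fun n => ⟨hξ n, hζ n⟩
  have hw₀ := (isClosed_gapWitness hcont).mem_of_tendsto
    (((ha.comp hφ.tendsto_atTop).prodMk_nhds (hb.comp hφ.tendsto_atTop)).prodMk_nhds hlim)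
    (Eventually.of_forall fun n => hw (φ n))
  exact ⟨ge_of_tendsto' ha fun n => (h n).1, hαβ, le_of_tendsto' hb fun n => (h n).2.2.1,
    ξ₀, ζ₀, hw₀⟩

include hrefl hsymm htri hcont hinv in
/-- Overlapping or abutting gaps merge: couple the right witness of the first gap with the left
witness of the second. -/
theorem IsGap.merge {a b a' b' : ℝ} (h : IsGap ρ a b) (h' : IsGap ρ a' b') (hle : a' ≤ b)
    (hlt : a < b') : IsGap ρ a b' := by
  obtain ⟨ha, -, -, ξ, ζ, hρ, hsep⟩ := h
  obtain ⟨-, -, hb', ξ', ζ', hρ', hsep'⟩ := h'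
  obtain ⟨p, q, hpq, hlevel⟩ := M.exists_coupling ζ ξ'
  refine ⟨ha, hlt, hb', ξ.comp p, ζ'.comp q, ?_, fun s => ?_⟩
  · have := htri (ξ.comp p) (ζ.comp p) (ζ'.comp q)
    rw [rho_comp hcont hinv, hρ, hpq, rho_comp hcont hinv, hρ'] at this
    exact le_antisymm (by linarith) (rho_nonneg hrefl hsymm htri _ _)
  set x := p.1 s
  set y := q.1 s
  have hxy : (ζ.1 x : ℝ) = ξ'.1 y := congrArg (fun φ : M => (φ.1 s : ℝ)) hpq
  by_cases hx : (ξ.1 x : ℝ) ≤ a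
  · exact Or.inl hx
  right
  show b' ≤ (ζ'.1 y : ℝ)
  have hζx : b ≤ ζ.1 x := (hsep x).resolve_left hx
  by_cases hy : a' < ξ'.1 y
  · exact (hsep' y).resolve_left hy.not_ge
  -- now `ζ x = ξ' y = b = a'`, and `x` or `y` is the appropriate end of its level set
  rcases hlevel s with hleft | hright
  · refine absurd ?_ hx
    rcases eq_or_ne x 0 with h0 | h0
    · rw [h0, M.map_zero]; exact ha
    refine (continuous_subtype_val.comp ξ.1.continuous).le_of_forall_lt_imp_le
      ⟨0, unitInterval.pos_iff_ne_zero.2 h0⟩ fun x' hx' => (hsep x').resolve_right fun hb => ?_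
    have : (ζ.1 x' : ℝ) < ζ.1 x := hleft x' hx'
    linarith
  · rcases eq_or_ne y 1 with h1 | h1
    · rw [h1, M.map_one]; exact hb'
    refine (continuous_subtype_val.comp ζ'.1.continuous).ge_of_forall_gt_imp_ge
      ⟨1, unitInterval.lt_one_iff_ne_one.2 h1⟩ fun y' hy' => (hsep' y').resolve_left fun ha' => ?_
    have : (ξ'.1 y : ℝ) < ξ'.1 y' := hright y' hy'
    linarith

end Gaps

/-- For any continuous `Homeo⁺[0,1]`-invariant pseudometric `ρ` on `𝔐`, the
complement `K_ρ = (0,1) ∖ U_ρ` has no isolated points. -/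
theorem stmt_15
    (ρ : M → M → ℝ)
    (hrefl : ∀ ξ : M, ρ ξ ξ = 0)
    (hsymm : ∀ ξ ζ : M, ρ ξ ζ = ρ ζ ξ)
    (htri : ∀ ξ ζ χ : M, ρ ξ χ ≤ ρ ξ ζ + ρ ζ χ)
    (hcont : Continuous fun p : M × M => ρ p.1 p.2)
    (hinv : ∀ (ξ ζ : M) (g : unitInterval ≃ₜ unitInterval) (hg : Monotone ⇑g),
      ρ (Mcomp ξ g hg) (Mcomp ζ g hg) = ρ ξ ζ) :
    ∀ t ∈ Set.Ioo (0 : ℝ) 1 \ Urho ρ, ∀ ε > (0 : ℝ),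
      ∃ s ∈ Set.Ioo (0 : ℝ) 1 \ Urho ρ, s ≠ t ∧ |s - t| < ε := by
  rintro t ⟨⟨ht0, ht1⟩, htU⟩ ε hε
  by_contra! hfar
  set δ := min ε (min t (1 - t))
  have hδt : δ ≤ t := (min_le_right _ _).trans (min_le_left _ _)
  have hδt' : δ ≤ 1 - t := (min_le_right _ _).trans (min_le_right _ _)
  have hδ : 0 < δ := lt_min hε (lt_min ht0 (by linarith))
  refine htU (mem_unionIoo_of_diff_subset (IsGap.merge hrefl hsymm htri hcont hinv)
    (IsGap.of_tendsto hcont hinv) hδ fun s ⟨hs, hst⟩ => ?_)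
  by_contra hsU
  have hst' : |s - t| < ε :=
    (abs_sub_lt_iff.2 ⟨by linarith [hs.2], by linarith [hs.1]⟩).trans_le (min_le_left _ _)
  exact (hfar s ⟨⟨by linarith [hs.1], by linarith [hs.2]⟩, hsU⟩ hst).not_gt hst'
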